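/- arXiv:1811.03972 — 4 statements merged into one kernel-verified Lean document; each statement's English description precedes it below -/
import Mathlib

section
/- Let G be a finite group, χ a faithful irreducible complex character of G, and x, y ∈ G with [x,y] ∈ Z(G). If χ(x) ≠ 0, then [x,y] = 1. -/
open CategoryTheory

/-!
By Schur's lemma a central element `z` of `G` acts on an irreducible representation by a
scalar `c`, so `χ(g z) = c χ(g)` for all `g`. For `z = [x,y]` the element `x z = y⁻¹ x y` is
conjugate to `x`, hence `χ(x) = c χ(x)`, and `χ(x) ≠ 0` forces `c = 1`. Then `χ(z) = χ(1)`,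
and faithfulness gives `z = 1`.
-/

namespace FDRep

universe u v

variable {k : Type u} {G : Type v} [Field k] [Group G]

noncomputable def ρHomOfMemCenter (V : FDRep k G) {z : G} (hz : z ∈ Subgroup.center G) : V ⟶ V :=
  ⟨InducedCategory.homMk (ModuleCat.ofHom (V.ρ z)), fun g => by
    ext v
    change V.ρ z (V.ρ g v) = V.ρ g (V.ρ z v)
    rw [← Module.End.mul_apply, ← Module.End.mul_apply, ← map_mul, ← map_mul,
      Subgroup.mem_center_iff.mp hz g]⟩

theorem exists_ρ_eq_smul_one_of_mem_center [IsAlgClosed k] (V : FDRep k G) [Simple V] {z : G}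
    (hz : z ∈ Subgroup.center G) : ∃ c : k, V.ρ z = c • 1 := by
  obtain ⟨c, hc⟩ := endomorphism_simple_eq_smul_id k (ρHomOfMemCenter V hz)
  exact ⟨c, (congrArg (fun f : V ⟶ V => f.hom.hom.hom) hc).symm⟩

theorem character_mul_of_ρ_eq_smul_one (V : FDRep k G) {z : G} {c : k} (hc : V.ρ z = c • 1)
    (g : G) : V.character (g * z) = c * V.character g := by
  simp only [character, map_mul, hc, mul_smul_comm, mul_one, map_smul, smul_eq_mul]

theorem ρ_commutator_eq_one_of_character_ne_zero [IsAlgClosed k] (V : FDRep k G) [Simple V]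
    {x y : G} (hz : x⁻¹ * y⁻¹ * x * y ∈ Subgroup.center G) (hx : V.character x ≠ 0) :
    V.ρ (x⁻¹ * y⁻¹ * x * y) = 1 := by
  obtain ⟨c, hc⟩ := exists_ρ_eq_smul_one_of_mem_center V hz
  have hconj : V.character (x * (x⁻¹ * y⁻¹ * x * y)) = V.character x := by
    simpa [mul_assoc] using V.char_conj x y⁻¹
  have hc1 : c = 1 := by
    rw [character_mul_of_ρ_eq_smul_one V hc] at hconj
    exact mul_right_cancel₀ hx (hconj.trans (one_mul _).symm)
  rw [hc, hc1, one_smul]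

end FDRep

theorem central_commutator_trivial_of_nonvanishing_general (G : Type) [Group G]
    (V : FDRep ℂ G) [Simple V]
    (hfaith : ∀ g : G, V.character g = V.character 1 → g = 1)
    (x y : G) (hz : x⁻¹ * y⁻¹ * x * y ∈ Subgroup.center G)
    (hx : V.character x ≠ 0) :
    x⁻¹ * y⁻¹ * x * y = 1 :=
  hfaith _ <| by
    simp only [FDRep.character, FDRep.ρ_commutator_eq_one_of_character_ne_zero V hz hx, map_one]

/-- If `χ` is a faithful irreducible character of a finite group `G`, `x, y ∈ G` with
`[x,y] ∈ Z(G)` and `χ(x) ≠ 0`, then `[x,y] = 1`. -/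
theorem central_commutator_trivial_of_nonvanishing (G : Type) [Group G] [Fintype G]
    (V : FDRep ℂ G) [Simple V]
    (hfaith : ∀ g : G, V.character g = V.character 1 → g = 1)
    (x y : G) (hz : x⁻¹ * y⁻¹ * x * y ∈ Subgroup.center G)
    (hx : V.character x ≠ 0) :
    x⁻¹ * y⁻¹ * x * y = 1 :=
  central_commutator_trivial_of_nonvanishing_general G V hfaith x y hz hx
end

section
/- Let G be a finite group and χ a faithful irreducible character of G whose set of zeros is exactly one conjugacy class 𝒞. Then every non-trivial element z of Z(G) is a commutator; in fact z = [x,y] for some x, y ∈ 𝒞. -/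
/-!
Since `z` is central, Schur's lemma makes it act on `V` by a scalar `ε`, so `χ (g * z) = ε * χ g`
for all `g`, and `ε ≠ 1` by faithfulness. Hence `χ` vanishes on every `g` conjugate to `g * z`.
Taking `x ∈ 𝒞`, the element `x * z` is again a zero of `χ`, hence conjugate to `x`, which writes
`z = [x, y]` for some `y`; then `y` is conjugate to `y * z`, so `y ∈ 𝒞` as well.
-/

open CategoryTheory

section Commutator

variable {G : Type*} [Group G]

theorem exists_commutator_eq_of_isConj_mul {x z : G} (h : IsConj x (x * z)) :
    ∃ y, z = x⁻¹ * y⁻¹ * x * y := by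
  obtain ⟨g, hg⟩ := isConj_iff.mp h
  refine ⟨g⁻¹, ?_⟩
  calc z = x⁻¹ * (x * z) := by group
    _ = x⁻¹ * (g * x * g⁻¹) := by rw [hg]
    _ = x⁻¹ * g⁻¹⁻¹ * x * g⁻¹ := by group

theorem isConj_mul_of_mem_center_of_eq_commutator {x y z : G} (hz : z ∈ Subgroup.center G)
    (h : z = x⁻¹ * y⁻¹ * x * y) : IsConj y (y * z) := by
  have hxz : x * z * x⁻¹ = z := by
    rw [Subgroup.mem_center_iff.mp hz x, mul_inv_cancel_right]
  refine isConj_iff.mpr ⟨x, ?_⟩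
  calc x * y * x⁻¹ = y * (x * (x⁻¹ * y⁻¹ * x * y) * x⁻¹) := by group
    _ = y * z := by rw [← h, hxz]

end Commutator

namespace FDRep

variable {k G : Type*} [Field k] [Group G]

theorem exists_ρ_eq_smul_id_of_mem_center [IsAlgClosed k] (V : FDRep k G) [Simple V] {z : G}
    (hz : z ∈ Subgroup.center G) : ∃ ε : k, V.ρ z = ε • LinearMap.id := by
  let φ : V ⟶ V :=
    ⟨InducedCategory.homMk (ModuleCat.ofHom (V.ρ z)), fun g => by
      ext v
      change V.ρ z (V.ρ g v) = V.ρ g (V.ρ z v)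
      rw [← Module.End.mul_apply, ← Module.End.mul_apply, ← map_mul, ← map_mul,
        Subgroup.mem_center_iff.mp hz g]⟩
  obtain ⟨ε, hε⟩ := endomorphism_simple_eq_smul_id k φ
  exact ⟨ε, (congrArg (fun f : V ⟶ V => f.hom.hom.hom) hε).symm⟩

theorem exists_character_mul_eq_mul_of_mem_center [IsAlgClosed k] (V : FDRep k G) [Simple V]
    {z : G} (hz : z ∈ Subgroup.center G) :
    ∃ ε : k, ∀ g, V.character (g * z) = ε * V.character g := by
  obtain ⟨ε, hε⟩ := V.exists_ρ_eq_smul_id_of_mem_center hz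
  refine ⟨ε, fun g => ?_⟩
  change LinearMap.trace k V (V.ρ (g * z)) = ε * LinearMap.trace k V (V.ρ g)
  rw [map_mul, hε, mul_smul_comm, Module.End.mul_eq_comp, LinearMap.comp_id, map_smul,
    smul_eq_mul]

theorem character_eq_zero_of_isConj_mul (V : FDRep k G) {z : G} {ε : k}
    (hε : ∀ g, V.character (g * z) = ε * V.character g) (hε1 : ε ≠ 1) {g : G}
    (h : IsConj g (g * z)) : V.character g = 0 := by
  obtain ⟨c, hc⟩ := isConj_iff.mp h
  have hfix : ε * V.character g = V.character g := by rw [← hε, ← hc, char_conj]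
  by_contra hg
  exact hε1 ((mul_eq_right₀ hg).mp hfix)

end FDRep

theorem central_elements_are_commutators_of_zeros_general (G : Type) [Group G]
    (V : FDRep ℂ G) [Simple V]
    (hfaith : ∀ g : G, V.character g = V.character 1 → g = 1)
    (c : G) (hC : {g : G | V.character g = 0} = conjugatesOf c) :
    ∀ z ∈ Subgroup.center G, z ≠ 1 →
      ∃ x y : G, V.character x = 0 ∧ V.character y = 0 ∧ z = x⁻¹ * y⁻¹ * x * y := by
  intro z hz hz1
  obtain ⟨ε, hε⟩ := V.exists_character_mul_eq_mul_of_mem_center hz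
  have hε1 : ε ≠ 1 := fun h => hz1 <| hfaith z <| by simpa [h] using hε 1
  have hc0 : V.character c = 0 := by
    change c ∈ {g : G | V.character g = 0}
    rw [hC]
    exact mem_conjugatesOf_self
  have hcz : c * z ∈ conjugatesOf c := by
    rw [← hC]
    simp [hε, hc0]
  obtain ⟨y, hy⟩ := exists_commutator_eq_of_isConj_mul hcz
  have hyz := isConj_mul_of_mem_center_of_eq_commutator hz hy
  exact ⟨c, y, hc0, V.character_eq_zero_of_isConj_mul hε hε1 hyz, hy⟩

/-- If `χ` is a faithful irreducible character of `G` whose set of zeros is exactly one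
conjugacy class `𝒞`, then every non-trivial central element is a commutator `[x,y]` with
`x, y ∈ 𝒞`. -/
theorem central_elements_are_commutators_of_zeros (G : Type) [Group G] [Fintype G]
    (V : FDRep ℂ G) [Simple V]
    (hfaith : ∀ g : G, V.character g = V.character 1 → g = 1)
    (c : G) (hC : {g : G | V.character g = 0} = conjugatesOf c) :
    ∀ z ∈ Subgroup.center G, z ≠ 1 →
      ∃ x y : G, V.character x = 0 ∧ V.character y = 0 ∧ z = x⁻¹ * y⁻¹ * x * y :=
  central_elements_are_commutators_of_zeros_general G V hfaith c hC
end

section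
/- Let G be a finite group and χ a faithful irreducible character of G whose set of zeros is exactly one conjugacy class 𝒞, and suppose every element of 𝒞 has order a power of a prime p. Then Z(G) is a cyclic p-group. -/
/-!
By Schur's lemma a central element `z` acts on the irreducible module by a scalar `ω(z)`, and
`ω : Z(G) →* ℂ` is injective by faithfulness, so `Z(G)` embeds in the units of a field and is
cyclic.
Since `χ(z g) = ω(z) χ(g)`, the zero set of `χ` is stable under multiplication by `Z(G)`. Hence
for `c` in the zero class, `z c` has `p`-power order too, and so has `z = (z c) c⁻¹` because
`z c` and `c⁻¹` commute.
-/

open CategoryTheory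

theorem Commute.exists_mul_pow_pow_eq_one {M : Type*} [Monoid M] {p : ℕ} {a b : M}
    (h : Commute a b) (ha : ∃ m, a ^ p ^ m = 1) (hb : ∃ n, b ^ p ^ n = 1) :
    ∃ k, (a * b) ^ p ^ k = 1 := by
  obtain ⟨m, hm⟩ := ha
  obtain ⟨n, hn⟩ := hb
  refine ⟨m + n, ?_⟩
  rw [h.mul_pow, pow_add, pow_mul, hm, one_pow, one_mul, mul_comm, pow_mul, hn, one_pow]

namespace FDRep

universe u

variable {k G : Type u} [Field k] [Group G] (V : FDRep k G)

theorem nontrivial_of_simple [Simple V] : Nontrivial V := by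
  by_contra h
  rw [not_nontrivial_iff_subsingleton] at h
  exact id_nonzero V (by ext v; exact Subsingleton.elim _ _)

theorem exists_ρ_eq_algebraMap_of_mem_center [IsAlgClosed k] [Simple V] {z : G}
    (hz : z ∈ Subgroup.center G) : ∃ ω : k, V.ρ z = algebraMap k _ ω := by
  let f : V ⟶ V := ⟨FGModuleCat.ofHom (V.ρ z), fun g => by
    ext v
    change V.ρ z (V.ρ g v) = V.ρ g (V.ρ z v)
    rw [← Module.End.mul_apply, ← Module.End.mul_apply, ← map_mul, ← map_mul,
      Subgroup.mem_center_iff.mp hz g]⟩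
  obtain ⟨ω, hω⟩ := endomorphism_simple_eq_smul_id k f
  refine ⟨ω, ?_⟩
  have := congrArg (fun f : V ⟶ V => f.hom.hom.hom) hω
  simp only [Action.smul_hom, Action.id_hom] at this
  rw [Algebra.algebraMap_eq_smul_one]
  exact this.symm

theorem ρ_injective (hV : ∀ g, V.character g = V.character 1 → g = 1) : Function.Injective V.ρ :=
  (injective_iff_map_eq_one V.ρ).mpr fun g hg => hV g (by rw [character, character, hg, V.ρ.map_one])

variable [IsAlgClosed k] [Simple V]

noncomputable def centralCharacter : Subgroup.center G →* k :=
  have := V.nontrivial_of_simple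
  have ρ_eq (z : Subgroup.center G) :=
    Classical.choose_spec (V.exists_ρ_eq_algebraMap_of_mem_center z.2)
  { toFun z := Classical.choose (V.exists_ρ_eq_algebraMap_of_mem_center z.2)
    map_one' := (algebraMap k (V →ₗ[k] V)).injective <| by
      rw [← ρ_eq, OneMemClass.coe_one, map_one, map_one]
    map_mul' z w := (algebraMap k (V →ₗ[k] V)).injective <| by
      rw [map_mul, ← ρ_eq, ← ρ_eq, ← ρ_eq, Subgroup.coe_mul, map_mul] }

theorem ρ_eq_algebraMap_centralCharacter (z : Subgroup.center G) :
    V.ρ z = algebraMap k _ (V.centralCharacter z) :=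
  Classical.choose_spec (V.exists_ρ_eq_algebraMap_of_mem_center z.2)

theorem character_mul_of_mem_center (z : Subgroup.center G) (g : G) :
    V.character (z * g) = V.centralCharacter z * V.character g := by
  rw [character, map_mul, ρ_eq_algebraMap_centralCharacter, Algebra.algebraMap_eq_smul_one,
    smul_mul_assoc, one_mul, map_smul, smul_eq_mul]
  rfl

theorem centralCharacter_injective (hρ : Function.Injective V.ρ) :
    Function.Injective V.centralCharacter := fun z w h =>
  Subtype.ext <| hρ <| by rw [ρ_eq_algebraMap_centralCharacter, h, ρ_eq_algebraMap_centralCharacter]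

theorem isCyclic_center [Finite G] (hρ : Function.Injective V.ρ) : IsCyclic (Subgroup.center G) :=
  isCyclic_of_injective_ringHom _ (V.centralCharacter_injective hρ)

theorem isPGroup_center {p : ℕ} {c : G} (hc : V.character c = 0)
    (hzero : ∀ g, V.character g = 0 → ∃ n, g ^ p ^ n = 1) : IsPGroup p (Subgroup.center G) := by
  intro z
  have hzc : V.character (z * c) = 0 := by rw [character_mul_of_mem_center, hc, mul_zero]
  have hcomm : Commute ((z : G) * c) c⁻¹ :=
    (z.2.comm c⁻¹).mul_left (Commute.refl c).inv_right
  obtain ⟨n, hn⟩ := hcomm.exists_mul_pow_pow_eq_one (hzero _ hzc)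
    ((hzero c hc).imp fun n hn => by rw [inv_pow, hn, inv_one])
  exact ⟨n, Subtype.ext (by simpa using hn)⟩

end FDRep

theorem center_is_cyclic_p_group_general (G : Type) [Group G] [Fintype G]
    (V : FDRep ℂ G) [Simple V]
    (hfaith : ∀ g : G, V.character g = V.character 1 → g = 1)
    (c : G) (hC : {g : G | V.character g = 0} = conjugatesOf c)
    (p : ℕ)
    (hord : ∀ g : G, V.character g = 0 → ∃ k : ℕ, orderOf g = p ^ k) :
    IsCyclic ↥(Subgroup.center G) ∧ IsPGroup p ↥(Subgroup.center G) := by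
  have hc : V.character c = 0 := (Set.ext_iff.mp hC c).mpr mem_conjugatesOf_self
  refine ⟨V.isCyclic_center (V.ρ_injective hfaith), V.isPGroup_center hc fun g hg => ?_⟩
  obtain ⟨k, hk⟩ := hord g hg
  exact ⟨k, hk ▸ pow_orderOf_eq_one g⟩

/-- If `χ` is a faithful irreducible character of `G` whose set of zeros is exactly one
conjugacy class, all of whose elements have `p`-power order, then `Z(G)` is a cyclic
`p`-group. -/
theorem center_is_cyclic_p_group (G : Type) [Group G] [Fintype G]
    (V : FDRep ℂ G) [Simple V]
    (hfaith : ∀ g : G, V.character g = V.character 1 → g = 1)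
    (c : G) (hC : {g : G | V.character g = 0} = conjugatesOf c)
    (p : ℕ) (hp : p.Prime)
    (hord : ∀ g : G, V.character g = 0 → ∃ k : ℕ, orderOf g = p ^ k) :
    IsCyclic ↥(Subgroup.center G) ∧ IsPGroup p ↥(Subgroup.center G) :=
  center_is_cyclic_p_group_general G V hfaith c hC p hord
end

section
/- Let T be a finite group with a central subgroup Z such that T/Z is a non-abelian simple group. If the solvable residual T^∞ of T is simple, then T = T^∞ × Z. -/
/-!
A non-abelian simple group is perfect, so `T = T' Z`. Since `Z` is central, the commutator of
two elements only depends on their `T'`-components, hence `T'` is perfect and `T^∞ = T'`.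
Now `T^∞ ∩ Z` is normal in the simple group `T^∞`, and it cannot be all of `T^∞` since then
`Z = T' Z = T`; so `T^∞ ∩ Z = 1`, and as `Z` is central, `T = T^∞ × Z`.
-/

open Subgroup Group
open scoped commutatorElement

/-- The solvable residual of a group: the intersection of the derived series, i.e. for a
finite group the last term of the derived series. -/
def solvableResidual (T : Type) [Group T] : Subgroup T :=
  ⨅ n : ℕ, derivedSeries T n

section Perfect

variable {G : Type} [Group G]

theorem Group.IsPerfect.of_isSimpleGroup [IsSimpleGroup G] (h : ∃ a b : G, a * b ≠ b * a) :
    IsPerfect G := by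
  refine isPerfect_def.mpr ((commutator_normal ⊤ ⊤).eq_bot_or_eq_top.resolve_left fun hbot ↦ ?_)
  obtain ⟨a, b, hab⟩ := h
  exact hab (((commutator_eq_bot_iff G).mp hbot).is_comm.comm a b)

theorem commutator_sup_eq_top_of_isPerfect_quotient (N : Subgroup G) [N.Normal]
    [IsPerfect (G ⧸ N)] : commutator G ⊔ N = ⊤ := by
  have hmap : (commutator G).map (QuotientGroup.mk' N) = ⊤ := by
    rw [map_commutator_eq, (QuotientGroup.mk' N).range_eq_top_of_surjective
      (QuotientGroup.mk'_surjective N), ← commutator_def, IsPerfect.commutator_eq_top]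
  simpa [comap_map_eq] using congrArg (comap (QuotientGroup.mk' N)) hmap

theorem commutatorElement_mul_mul_of_mem_center {a b z w : G} (hz : z ∈ center G)
    (hw : w ∈ center G) : ⁅a * z, b * w⁆ = ⁅a, b⁆ := by
  have hz' : ⁅z, b * w⁆ = 1 :=
    commutatorElement_eq_one_iff_mul_comm.mpr (mem_center_iff.mp hz _).symm
  have hw' : ⁅a, w⁆ = 1 := commutatorElement_eq_one_iff_mul_comm.mpr (mem_center_iff.mp hw a)
  rw [commutatorElement_mul_left_eq_conj_mul, hz', mul_one, mul_inv_cancel, one_mul,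
    commutatorElement_mul_right_eq_mul_conj, hw', mul_one, mul_inv_cancel_right]

theorem isPerfect_commutator_of_commutator_sup_eq_top {Z : Subgroup G} (hZ : Z ≤ center G)
    (hsup : commutator G ⊔ Z = ⊤) : IsPerfect (commutator G) := by
  have hdecomp : ∀ g : G, ∃ a ∈ commutator G, ∃ z ∈ Z, a * z = g := fun g ↦
    Set.mem_mul.mp (by rw [← normal_mul, hsup]; trivial)
  refine isPerfect_iff.mpr (le_antisymm (commutator_le_self _) (commutator_le.mpr ?_))
  rintro g - h -
  obtain ⟨a, ha, z, hz, rfl⟩ := hdecomp g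
  obtain ⟨b, hb, w, hw, rfl⟩ := hdecomp h
  rw [commutatorElement_mul_mul_of_mem_center (hZ hz) (hZ hw)]
  exact commutator_mem_commutator ha hb

theorem derivedSeries_succ_eq_commutator [IsPerfect (commutator G)] (n : ℕ) :
    derivedSeries G (n + 1) = commutator G := by
  induction n with
  | zero => exact derivedSeries_one G
  | succ n ih => rw [derivedSeries_succ, ih, commutator_eq_self]

theorem solvableResidual_eq_commutator [IsPerfect (commutator G)] :
    solvableResidual G = commutator G :=
  le_antisymm ((iInf_le _ 1).trans (derivedSeries_one G).le) <| le_iInf fun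
    | 0 => le_top
    | n + 1 => (derivedSeries_succ_eq_commutator n).ge

end Perfect

namespace Subgroup

variable {G : Type} [Group G] {H K : Subgroup G}

theorem isComplement'_of_isCompl [K.Normal] (h : IsCompl H K) : H.IsComplement' K :=
  isComplement'_of_disjoint_and_mul_eq_univ h.disjoint
    (by rw [← mul_normal, h.sup_eq_top, coe_top])

theorem IsComplement'.nonempty_mulEquiv_prod_of_le_center (h : H.IsComplement' K)
    (hK : K ≤ center G) : Nonempty (G ≃* H × K) :=
  ⟨(MulEquiv.ofBijective (H.subtype.noncommCoprod K.subtype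
    fun x y ↦ mem_center_iff.mp (hK y.2) x) h).symm⟩

theorem disjoint_of_isSimpleGroup_of_sup_eq_top [K.Normal] [IsSimpleGroup H]
    (hsup : H ⊔ K = ⊤) (hK : K ≠ ⊤) : Disjoint H K := by
  rcases IsSimpleGroup.eq_bot_or_eq_top_of_normal (K.subgroupOf H) inferInstance with h | h
  · exact (subgroupOf_eq_bot.mp h).symm
  · exact absurd (by rw [← sup_eq_right.mpr (subgroupOf_eq_top.mp h), hsup]) hK

end Subgroup

theorem eq_residual_times_center_general (T : Type) [Group T]
    (Z : Subgroup T) [Z.Normal] (hZ : Z ≤ Subgroup.center T)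
    (hsimple : IsSimpleGroup (T ⧸ Z))
    (hnonab : ∃ a b : T ⧸ Z, a * b ≠ b * a)
    (hres : IsSimpleGroup ↥(solvableResidual T)) :
    Nonempty (T ≃* (↥(solvableResidual T) × ↥Z)) ∧
      solvableResidual T ⊔ Z = ⊤ ∧ solvableResidual T ⊓ Z = ⊥ := by
  have : IsPerfect (T ⧸ Z) := IsPerfect.of_isSimpleGroup hnonab
  have hsup : commutator T ⊔ Z = ⊤ := commutator_sup_eq_top_of_isPerfect_quotient Z
  have : IsPerfect (commutator T) := isPerfect_commutator_of_commutator_sup_eq_top hZ hsup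
  rw [solvableResidual_eq_commutator] at hres ⊢
  have hZ_ne_top : Z ≠ ⊤ := by
    rintro rfl
    exact not_subsingleton (T ⧸ (⊤ : Subgroup T)) QuotientGroup.subsingleton_quotient_top
  have hcompl : IsCompl (commutator T) Z :=
    ⟨disjoint_of_isSimpleGroup_of_sup_eq_top hsup hZ_ne_top, codisjoint_iff.mpr hsup⟩
  exact ⟨(isComplement'_of_isCompl hcompl).nonempty_mulEquiv_prod_of_le_center hZ,
    hcompl.sup_eq_top, hcompl.inf_eq_bot⟩

/-- If `Z ≤ Z(T)`, `T/Z` is non-abelian simple and the solvable residual `T^∞` is simple,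
then `T = T^∞ × Z`. -/
theorem eq_residual_times_center (T : Type) [Group T] [Fintype T]
    (Z : Subgroup T) [Z.Normal] (hZ : Z ≤ Subgroup.center T)
    (hsimple : IsSimpleGroup (T ⧸ Z))
    (hnonab : ∃ a b : T ⧸ Z, a * b ≠ b * a)
    (hres : IsSimpleGroup ↥(solvableResidual T)) :
    Nonempty (T ≃* (↥(solvableResidual T) × ↥Z)) ∧
      solvableResidual T ⊔ Z = ⊤ ∧ solvableResidual T ⊓ Z = ⊥ :=
  eq_residual_times_center_general T Z hZ hsimple hnonab hres
end
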